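/- arXiv:2108.10754 — 4 statements merged into one kernel-verified Lean document; each statement's English description precedes it below -/
import Mathlib

section
/- Consider functions κ : {1,2,3,4} → {0,1,2,3,4} (in Lean: Fin 4 → Fin 5). Call κ and κ' equivalent if κ' = σ̃ ∘ κ ∘ τ̂ for some permutations σ, τ of {1,2,3}. This equivalence relation partitions the set of all 5⁴ = 625 such functions into exactly 52 equivalence classes (orbits of the natural S₃ × S₃ action). -/
/-!
`pRel` is the orbit relation of `S₃ × S₃` acting on `Fin 4 → Fin 5` by
`(σ, τ) • κ = σ̃ ∘ κ ∘ τ̂⁻¹`, so by Burnside's lemma the number of classes is the average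
number of fixed points of the `36` group elements; these fixed-point counts sum to `1872 = 52 · 36`.
-/

/-- The identification of `{1,2,3}` (modelled by `Fin 3`) with the subset `{1,2,3}`
of `{0,1,2,3,4}` (modelled by `Fin 5`), sending `i` to `i + 1`. -/
def embFive : Fin 3 ≃ {j : Fin 5 // 1 ≤ j.val ∧ j.val ≤ 3} where
  toFun i := ⟨⟨i.val + 1, by have := i.isLt; omega⟩,
    (by have := i.isLt; omega : 1 ≤ i.val + 1 ∧ i.val + 1 ≤ 3)⟩
  invFun j := ⟨j.val.val - 1, by have := j.property; omega⟩
  left_inv i := by apply Fin.ext; simp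
  right_inv j := by
    apply Subtype.ext; apply Fin.ext
    have := j.property; simp; omega

/-- The identification of `{1,2,3}` (modelled by `Fin 3`) with the subset of indices
`{1,2,3}` of the index set `{1,2,3,4}` (modelled by `Fin 4`, where the index `4` is the
last element of `Fin 4`). -/
def embFour : Fin 3 ≃ {j : Fin 4 // j.val ≤ 2} where
  toFun i := ⟨⟨i.val, by have := i.isLt; omega⟩, (by have := i.isLt; omega : i.val ≤ 2)⟩
  invFun j := ⟨j.val.val, by have := j.property; omega⟩
  left_inv i := Fin.ext rfl
  right_inv j := Subtype.ext (Fin.ext rfl)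

/-- `σ̃`: the permutation of `{0,1,2,3,4}` fixing `0` and `4` and agreeing with `σ` on
`{1,2,3}`. -/
def tilde (σ : Equiv.Perm (Fin 3)) : Equiv.Perm (Fin 5) :=
  σ.extendDomain embFive

/-- `τ̂`: the permutation of the index set `{1,2,3,4}` fixing `4` and agreeing with `τ` on
`{1,2,3}`. -/
def hat (τ : Equiv.Perm (Fin 3)) : Equiv.Perm (Fin 4) :=
  τ.extendDomain embFour

/-- Two punctured quartets `κ, κ' : {1,2,3,4} → {0,1,2,3,4}` are equivalent iff
`κ' = σ̃ ∘ κ ∘ τ̂` for some permutations `σ, τ` of `{1,2,3}`. -/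
def pRel (κ κ' : Fin 4 → Fin 5) : Prop :=
  ∃ σ τ : Equiv.Perm (Fin 3), κ' = ⇑(tilde σ) ∘ κ ∘ ⇑(hat τ)

open Equiv MulAction Finset

section

variable {G H α β : Type*} [Group G] [Group H] [MulAction G β] [MulAction H α]

abbrev prodArrowAction : MulAction (G × H) (α → β) where
  smul gh f a := gh.1 • f (gh.2⁻¹ • a)
  one_smul f := funext fun a => show (1 : G) • f ((1 : H)⁻¹ • a) = f a by simp
  mul_smul gh gh' f := funext fun a =>
    show (gh.1 * gh'.1) • f ((gh.2 * gh'.2)⁻¹ • a) = gh.1 • gh'.1 • f (gh'.2⁻¹ • gh.2⁻¹ • a) by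
      rw [mul_inv_rev, mul_smul, mul_smul]

attribute [local instance] prodArrowAction

theorem prodArrowAction_orbitRel_iff {f f' : α → β} :
    orbitRel (G × H) (α → β) f' f ↔ ∃ (g : G) (h : H), f' = fun a => g • f (h • a) := by
  rw [orbitRel_apply, mem_orbit_iff]
  constructor
  · rintro ⟨⟨g, h⟩, rfl⟩
    exact ⟨g, h⁻¹, rfl⟩
  · rintro ⟨g, h, rfl⟩
    exact ⟨(g, h⁻¹), funext fun a => by
      show g • f (h⁻¹⁻¹ • a) = _; rw [inv_inv]⟩

theorem prodArrowAction_mem_fixedBy_iff {g : G} {h : H} {f : α → β} :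
    f ∈ fixedBy (α → β) (g, h) ↔ ∀ a, g • f a = f (h • a) := by
  rw [mem_fixedBy]
  constructor
  · intro hf a
    calc g • f a = g • f (h⁻¹ • h • a) := by rw [inv_smul_smul]
      _ = f (h • a) := congrFun hf (h • a)
  · intro hf
    funext a
    show g • f (h⁻¹ • a) = f a
    rw [hf, smul_inv_smul]

theorem prodArrowAction_card_orbits_mul_card_group [Fintype G] [Fintype H] [Fintype α]
    [DecidableEq α] [Fintype β] [DecidableEq β] :
    Nat.card (Quotient (orbitRel (G × H) (α → β))) * (Nat.card G * Nat.card H) =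
      ∑ g : G, ∑ h : H, #{f : α → β | ∀ a, g • f a = f (h • a)} := by
  classical
  rw [Nat.card_eq_fintype_card, Nat.card_eq_fintype_card, Nat.card_eq_fintype_card,
    ← Fintype.card_prod, ← sum_card_fixedBy_eq_card_orbits_mul_card_group, Fintype.sum_prod_type]
  refine sum_congr rfl fun g _ => sum_congr rfl fun h _ => ?_
  rw [Fintype.card_subtype]
  simp only [prodArrowAction_mem_fixedBy_iff]

end

instance : MulAction (Perm (Fin 3)) (Fin 5) := compHom _ (Perm.extendDomainHom embFive)

instance : MulAction (Perm (Fin 3)) (Fin 4) := compHom _ (Perm.extendDomainHom embFour)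

attribute [local instance] prodArrowAction

theorem pRel_eq_orbitRel : pRel = orbitRel (Perm (Fin 3) × Perm (Fin 3)) (Fin 4 → Fin 5) := by
  funext κ κ'
  rw [Setoid.comm', prodArrowAction_orbitRel_iff]
  rfl

/- By cycle types, `(σ, τ)` fixes `#Fix(σ̃) · ∏_{cycles c of τ} #Fix(σ̃ ^ |c|)` quartets:
`5 · (125 + 3 · 25 + 2 · 5) + 3 · 3 · (27 + 3 · 15 + 2 · 3) + 2 · 2 · (8 + 3 · 4 + 2 · 5) = 1872`. -/
theorem sum_card_intertwining_quartets :
    ∑ σ : Perm (Fin 3), ∑ τ : Perm (Fin 3),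
      #{κ : Fin 4 → Fin 5 | ∀ a, σ • κ a = κ (τ • a)} = 1872 := by
  decide +kernel

/-- The relation `pRel` is an equivalence relation on the `5⁴ = 625` functions
`{1,2,3,4} → {0,1,2,3,4}`, and it partitions them into exactly `52` equivalence classes
(the orbits of the natural `S₃ × S₃` action). -/
theorem fiftyTwo_orbits :
    Equivalence pRel ∧ Nat.card (Fin 4 → Fin 5) = 625 ∧ Nat.card (Quot pRel) = 52 := by
  refine ⟨pRel_eq_orbitRel ▸ (orbitRel _ _).iseqv, by simp, ?_⟩
  have burnside :
      Nat.card (Quot pRel) * (Nat.card (Perm (Fin 3)) * Nat.card (Perm (Fin 3))) = 1872 := by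
    rw [pRel_eq_orbitRel, ← sum_card_intertwining_quartets]
    -- the two filters are decided by different (equal) instances, hence `convert`
    convert prodArrowAction_card_orbits_mul_card_group (G := Perm (Fin 3)) (H := Perm (Fin 3))
      (α := Fin 4) (β := Fin 5)
    rfl
  rw [Nat.card_perm, Nat.card_fin] at burnside
  simp only [Nat.factorial] at burnside
  omega
end

section
/- Let G be a group and H a normal subgroup of G of index 3, and let V : G →* Abelianization H be the transfer homomorphism associated to the canonical projection H →* Abelianization H. Then for every g ∈ G with g ∉ H, one has g³ ∈ H and V(g) equals the image of g³ in Abelianization H (the 'outer transfer' formula). -/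
/-!
Since `G ⧸ H` has prime order 3, the image of `g ∉ H` generates it, so `⟨g⟩` acts transitively
on `G ⧸ H`. The transfer is then a product over a single `⟨g⟩`-orbit, of length `[G : H]`: it is
the image of `r⁻¹ g^[G:H] r` for a coset representative `r`. Writing `r = g^k h` with `h ∈ H`,
this is the `H`-conjugate `h⁻¹ g^[G:H] h`, which has the same image as `g^[G:H]` in any abelian
quotient of `H`.
-/

open MulAction Subgroup

namespace Subgroup

variable {G : Type*} [Group G] {H : Subgroup G} {g : G}

theorem isPretransitive_zpowers_of_zpowers_mk_eq_top [H.Normal]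
    (hg : zpowers (g : G ⧸ H) = ⊤) : IsPretransitive (zpowers g) (G ⧸ H) where
  exists_smul_eq x y := by
    induction x using QuotientGroup.induction_on with | H x => ?_
    obtain ⟨k, hk⟩ := mem_zpowers_iff.mp (hg ▸ mem_top (y * (x : G ⧸ H)⁻¹))
    refine ⟨⟨g ^ k, zpow_mem (mem_zpowers g) k⟩, ?_⟩
    change ((g ^ k * x : G) : G ⧸ H) = y
    rw [QuotientGroup.mk_mul, QuotientGroup.mk_zpow, hk, inv_mul_cancel_right]

theorem exists_zpow_inv_mul_mem_of_isPretransitive [IsPretransitive (zpowers g) (G ⧸ H)]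
    (r : G) : ∃ k : ℤ, (g ^ k)⁻¹ * r ∈ H := by
  obtain ⟨⟨_, hz⟩, hzr⟩ := MulAction.exists_smul_eq (zpowers g) ((1 : G) : G ⧸ H) r
  obtain ⟨k, rfl⟩ := mem_zpowers_iff.mp hz
  change ((g ^ k * 1 : G) : G ⧸ H) = r at hzr
  rw [mul_one] at hzr
  exact ⟨k, QuotientGroup.eq.mp hzr⟩

theorem index_eq_minimalPeriod_of_isPretransitive [H.FiniteIndex]
    [hg : IsPretransitive (zpowers g) (G ⧸ H)] (q : orbitRel.Quotient (zpowers g) (G ⧸ H)) :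
    H.index = Function.minimalPeriod (g • ·) q.out := by
  have := (pretransitive_iff_subsingleton_quotient _ _).mp hg
  let := Fintype.ofSubsingleton q
  rw [H.index_eq_sum_minimalPeriod g, Fintype.sum_subsingleton _ q]

theorem exists_mem_out_conj_pow_minimalPeriod_eq [H.FiniteIndex]
    [IsPretransitive (zpowers g) (G ⧸ H)] (q : orbitRel.Quotient (zpowers g) (G ⧸ H)) :
    ∃ h ∈ H, q.out.out⁻¹ * g ^ Function.minimalPeriod (g • ·) q.out * q.out.out =
      h⁻¹ * g ^ H.index * h := by
  obtain ⟨k, hk⟩ := exists_zpow_inv_mul_mem_of_isPretransitive (H := H) (g := g) q.out.out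
  refine ⟨_, hk, ?_⟩
  rw [← index_eq_minimalPeriod_of_isPretransitive q]
  group

theorem pow_index_mem_of_isPretransitive [H.FiniteIndex] [IsPretransitive (zpowers g) (G ⧸ H)] :
    g ^ H.index ∈ H := by
  let q : orbitRel.Quotient (zpowers g) (G ⧸ H) := ⟦((1 : G) : G ⧸ H)⟧
  obtain ⟨h, hh, hconj⟩ := exists_mem_out_conj_pow_minimalPeriod_eq q
  have hmem := QuotientGroup.out_conj_pow_minimalPeriod_mem H g q.out
  rw [hconj] at hmem
  exact (H.mul_mem_cancel_left (H.inv_mem hh)).mp ((H.mul_mem_cancel_right hh).mp hmem)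

end Subgroup

namespace MonoidHom

variable {G : Type*} [Group G] {H : Subgroup G} {A : Type*} [CommGroup A]

theorem map_inv_mul_mul_self (ϕ : H →* A) (x h : H) : ϕ (h⁻¹ * x * h) = ϕ x := by
  rw [map_mul, map_mul, map_inv, mul_comm, mul_inv_cancel_left]

theorem transfer_eq_pow_index_of_isPretransitive [H.FiniteIndex] (ϕ : H →* A) (g : G)
    [hg : IsPretransitive (zpowers g) (G ⧸ H)] :
    transfer ϕ g = ϕ ⟨g ^ H.index, pow_index_mem_of_isPretransitive⟩ := by
  let q : orbitRel.Quotient (zpowers g) (G ⧸ H) := ⟦((1 : G) : G ⧸ H)⟧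
  have := (pretransitive_iff_subsingleton_quotient _ _).mp hg
  let := Fintype.ofSubsingleton q
  rw [transfer_eq_prod_quotient_orbitRel_zpowers_quot, Fintype.prod_subsingleton _ q]
  obtain ⟨h, hh, hconj⟩ := exists_mem_out_conj_pow_minimalPeriod_eq q
  have hconj_H : (⟨q.out.out⁻¹ * g ^ Function.minimalPeriod (g • ·) q.out * q.out.out,
      QuotientGroup.out_conj_pow_minimalPeriod_mem H g q.out⟩ : H) =
      ⟨h, hh⟩⁻¹ * ⟨g ^ H.index, pow_index_mem_of_isPretransitive⟩ * ⟨h, hh⟩ :=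
    Subtype.ext hconj
  rw [hconj_H, map_inv_mul_mul_self]

end MonoidHom

/-- Outer transfer formula: if `H` is a normal subgroup of `G` of index `3` and
`V : G →* Abelianization H` is the transfer homomorphism associated to the canonical
projection `H →* Abelianization H`, then for every `g ∈ G` with `g ∉ H` one has
`g³ ∈ H` and `V g` is the image of `g³` in `Abelianization H`. -/
theorem outer_transfer (G : Type) [Group G] (H : Subgroup G) [H.Normal]
    (hidx : H.index = 3) (g : G) (hg : g ∉ H) :
    ∃ hmem : g ^ 3 ∈ H,
      haveI : H.FiniteIndex := ⟨by omega⟩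
      MonoidHom.transfer (Abelianization.of : ↥H →* Abelianization ↥H) g
        = Abelianization.of (⟨g ^ 3, hmem⟩ : ↥H) := by
  have : H.FiniteIndex := ⟨by omega⟩
  have : Fact (Nat.Prime 3) := ⟨Nat.prime_three⟩
  have hgen : zpowers (g : G ⧸ H) = ⊤ :=
    zpowers_eq_top_of_prime_card (by rw [← index_eq_card, hidx])
      (by rwa [ne_eq, QuotientGroup.eq_one_iff])
  have := isPretransitive_zpowers_of_zpowers_mk_eq_top hgen
  refine ⟨hidx ▸ pow_index_mem_of_isPretransitive, ?_⟩
  rw [MonoidHom.transfer_eq_pow_index_of_isPretransitive]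
  simp only [hidx]
end

section
/- The group L₁₁ presented by three generators a, t, u subject to the relations [t,a] = u, [u,a] = t³, t³ = [u,t], and u³ = 1 is infinite. -/
/-- The commutator `[x,y] = x⁻¹y⁻¹xy`. -/
def cmt {G : Type} [Group G] (x y : G) : G := x⁻¹ * y⁻¹ * x * y

namespace L11

/-- The generator `a`. -/
def a : FreeGroup (Fin 3) := FreeGroup.of 0
/-- The generator `t`. -/
def t : FreeGroup (Fin 3) := FreeGroup.of 1
/-- The generator `u`. -/
def u : FreeGroup (Fin 3) := FreeGroup.of 2

/-- The relators corresponding to the relations `[t,a] = u`, `[u,a] = t³`,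
`t³ = [u,t]`, `u³ = 1`. -/
def rels : Set (FreeGroup (Fin 3)) :=
  {cmt t a * u⁻¹, cmt u a * (t ^ 3)⁻¹, t ^ 3 * (cmt u t)⁻¹, u ^ 3}

end L11

/-- Map generators to `Multiplicative ℤ`: `a ↦ 1`, `t ↦ 0`, `u ↦ 0`. -/
def L11f : Fin 3 → Multiplicative ℤ :=
  ![Multiplicative.ofAdd 1, 1, 1]

lemma L11f_rels : ∀ r ∈ L11.rels, FreeGroup.lift L11f r = 1 := by
  intro r hr
  rcases hr with h | h | h | h <;> subst h <;>
    simp [cmt, L11.a, L11.t, L11.u, L11f, mul_comm]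

/-- The induced homomorphism. -/
def L11φ : PresentedGroup L11.rels →* Multiplicative ℤ :=
  PresentedGroup.toGroup L11f_rels

/-- The group `L₁₁ = ⟨a,t,u ∣ [t,a] = u, [u,a] = t³, t³ = [u,t], u³ = 1⟩` is infinite. -/
theorem L11_infinite : Infinite (PresentedGroup L11.rels) := by
  have hsurj : Function.Surjective L11φ := by
    intro n
    refine ⟨(PresentedGroup.of (rels := L11.rels) 0) ^ (Multiplicative.toAdd n), ?_⟩
    rw [map_zpow, L11φ, PresentedGroup.toGroup.of]
    show Multiplicative.ofAdd (1:ℤ) ^ (Multiplicative.toAdd n) = n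
    rw [← ofAdd_zsmul]
    simp
  exact Infinite.of_surjective L11φ hsurj
end

section
/- The group L₁₆ presented by two generators a, t subject to the relations [[t,a],a] = t³, [t,a]³ = 1, and [[[t,a],t],t] = 1 is infinite. -/
namespace L16

/-- The generator `a`. -/
def a : FreeGroup (Fin 2) := FreeGroup.of 0
/-- The generator `t`. -/
def t : FreeGroup (Fin 2) := FreeGroup.of 1

/-- The relators corresponding to the relations `[[t,a],a] = t³`, `[t,a]³ = 1` and
`[[[t,a],t],t] = 1`. -/
def rels : Set (FreeGroup (Fin 2)) :=
  {cmt (cmt t a) a * (t ^ 3)⁻¹, (cmt t a) ^ 3, cmt (cmt (cmt t a) t) t}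

end L16

lemma cmt_eq_one {G : Type} [CommGroup G] (x y : G) : cmt x y = 1 := by
  simp [cmt, mul_comm, mul_assoc, mul_left_comm]

/-- The abelianizing assignment: `a ↦ 1`, `t ↦ 0` in `ℤ`. -/
def L16f : Fin 2 → Multiplicative ℤ := ![Multiplicative.ofAdd 1, 1]

lemma L16f_cmt (u v : FreeGroup (Fin 2)) :
    FreeGroup.lift L16f (cmt u v) =
      cmt (FreeGroup.lift L16f u) (FreeGroup.lift L16f v) := by
  simp [cmt]

lemma L16_rels_killed : ∀ r ∈ L16.rels, FreeGroup.lift L16f r = 1 := by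
  intro r hr
  have ht : FreeGroup.lift L16f L16.t = 1 := by
    simp [L16.t, L16f]
  rcases hr with h | h | h <;> subst h <;>
    simp [L16f_cmt, cmt_eq_one, ht]

/-- The group `L₁₆ = ⟨a,t ∣ [[t,a],a] = t³, [t,a]³ = 1, [[[t,a],t],t] = 1⟩`
is infinite. -/
theorem L16_infinite : Infinite (PresentedGroup L16.rels) := by
  let g : PresentedGroup L16.rels →* Multiplicative ℤ :=
    PresentedGroup.toGroup L16_rels_killed
  have hs : Function.Surjective g := by
    intro z
    refine ⟨(PresentedGroup.of (rels := L16.rels) 0) ^ z.toAdd, ?_⟩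
    have : g (PresentedGroup.of (rels := L16.rels) 0) = Multiplicative.ofAdd 1 := by
      simp [g, PresentedGroup.toGroup.of, L16f]
    rw [map_zpow, this]
    rw [← ofAdd_zsmul]
    simp
  exact Infinite.of_surjective g hs
end
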